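/- arXiv:1903.00795 — 5 statements merged into one kernel-verified Lean document; each statement's English description precedes it below -/
import Mathlib

section
/- Let ρ = ((w₁,w₂,w₃), e^{iq}) ∈ Iso₀(Nil₃) with q ∉ 2πℤ (equivalently cos q ≠ 1). Then there exist unique a₁, a₂, c ∈ ℝ such that ρ = ((0,0,c),1) · ((a₁,a₂,0),1) · ((0,0,0),e^{iq}) · ((a₁,a₂,0),1)⁻¹. Explicitly, (a₁,a₂,c) is the unique solution of w₁ = a₁(1 − cos q) + a₂ sin q, w₂ = a₂(1 − cos q) − a₁ sin q, w₃ = c − (1/2)(a₁² + a₂²) sin q; in particular the map (a₁,a₂,c) ↦ (w₁,w₂,w₃) defined by these formulas is a bijection of ℝ³. -/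
/-!
Writing `a = a₁ + i a₂` and `w = w₁ + i w₂`, the first two equations say `w = (1 - e^{iq}) a`,
and `1 - e^{iq} ≠ 0` because `cos q ≠ 1`; concretely `|1 - e^{iq}|² = 2 (1 - cos q)`.
Once `a` is determined, the third equation `w₃ = c - ½ |a|² sin q` determines `c`.
-/

noncomputable section

/-- Multiplication of the Heisenberg group `Nil₃`, realized on `ℝ × ℝ × ℝ`. -/
def nilMul (a x : ℝ × ℝ × ℝ) : ℝ × ℝ × ℝ :=
  (a.1 + x.1, a.2.1 + x.2.1, a.2.2 + x.2.2 + (1/2) * (a.1 * x.2.1 - a.2.1 * x.1))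

/-- Rotation of the first two coordinates by the unit complex number `u = e^{iθ}`. -/
def rot (u : ℂ) (x : ℝ × ℝ × ℝ) : ℝ × ℝ × ℝ :=
  (u.re * x.1 - u.im * x.2.1, u.im * x.1 + u.re * x.2.1, x.2.2)

/-- Multiplication of `Iso₀(Nil₃) = Nil₃ ⋊ U₁`, realized on `(ℝ × ℝ × ℝ) × ℂ`. -/
def isoMul (ρ σ : (ℝ × ℝ × ℝ) × ℂ) : (ℝ × ℝ × ℝ) × ℂ :=
  (nilMul ρ.1 (rot ρ.2 σ.1), ρ.2 * σ.2)

/-- The conjugated element `𝔠 α e^{iq} α⁻¹` where `𝔠 = ((0,0,c),1)`, `α = ((a₁,a₂,0),1)`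
(with `α⁻¹ = ((−a₁,−a₂,0),1)`), and `e^{iq} = ((0,0,0), e^{iq})`; `x = (a₁,a₂,c)`. -/
def conjExpr (q : ℝ) (x : ℝ × ℝ × ℝ) : (ℝ × ℝ × ℝ) × ℂ :=
  isoMul
    (isoMul
      (isoMul (((0, 0, x.2.2) : ℝ × ℝ × ℝ), (1 : ℂ)) (((x.1, x.2.1, 0) : ℝ × ℝ × ℝ), (1 : ℂ)))
      (((0, 0, 0) : ℝ × ℝ × ℝ), Complex.exp ((q : ℂ) * Complex.I)))
    (((-x.1, -x.2.1, 0) : ℝ × ℝ × ℝ), (1 : ℂ))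

open Real Function

def conjExprFst (q : ℝ) (x : ℝ × ℝ × ℝ) : ℝ × ℝ × ℝ :=
  (x.1 * (1 - cos q) + x.2.1 * sin q,
   x.2.1 * (1 - cos q) - x.1 * sin q,
   x.2.2 - (1/2) * (x.1 ^ 2 + x.2.1 ^ 2) * sin q)

lemma conjExpr_eq (q : ℝ) (x : ℝ × ℝ × ℝ) :
    conjExpr q x = (conjExprFst q x, Complex.exp ((q : ℂ) * Complex.I)) := by
  simp only [conjExpr, conjExprFst, isoMul, nilMul, rot, Complex.one_re, Complex.one_im,
    Complex.exp_ofReal_mul_I_re, Complex.exp_ofReal_mul_I_im, one_mul, mul_one]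
  refine Prod.ext (Prod.ext ?_ (Prod.ext ?_ ?_)) rfl <;> ring

lemma two_mul_one_sub_cos_ne_zero {q : ℝ} (hq : cos q ≠ 1) : 2 * (1 - cos q) ≠ 0 :=
  mul_ne_zero two_ne_zero (sub_ne_zero.2 hq.symm)

lemma conjExprFst_injective {q : ℝ} (hq : cos q ≠ 1) : Injective (conjExprFst q) := by
  rintro ⟨a₁, a₂, c⟩ ⟨b₁, b₂, d⟩ h
  simp only [conjExprFst, Prod.mk.injEq] at h
  obtain ⟨h₁, h₂, h₃⟩ := h
  have hD := two_mul_one_sub_cos_ne_zero hq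
  have e₁ : a₁ = b₁ := mul_left_cancel₀ hD <| by
    linear_combination (1 - cos q) * h₁ - sin q * h₂ - (a₁ - b₁) * sin_sq_add_cos_sq q
  have e₂ : a₂ = b₂ := mul_left_cancel₀ hD <| by
    linear_combination sin q * h₁ + (1 - cos q) * h₂ - (a₂ - b₂) * sin_sq_add_cos_sq q
  subst e₁ e₂
  simp only [Prod.mk.injEq, true_and]
  linarith

lemma conjExprFst_surjective {q : ℝ} (hq : cos q ≠ 1) : Surjective (conjExprFst q) := by
  rintro ⟨w₁, w₂, w₃⟩
  have hD := two_mul_one_sub_cos_ne_zero hq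
  set a₁ := (w₁ * (1 - cos q) - w₂ * sin q) / (2 * (1 - cos q))
  set a₂ := (w₂ * (1 - cos q) + w₁ * sin q) / (2 * (1 - cos q))
  refine ⟨(a₁, a₂, w₃ + (1/2) * (a₁ ^ 2 + a₂ ^ 2) * sin q), ?_⟩
  simp only [conjExprFst, Prod.mk.injEq, a₁, a₂]
  refine ⟨?_, ?_, by ring⟩
  · field_simp
    linear_combination w₁ * sin_sq_add_cos_sq q
  · field_simp
    linear_combination w₂ * sin_sq_add_cos_sq q

/-- if `cos q ≠ 1` then every `ρ = ((w₁,w₂,w₃), e^{iq})` has a unique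
representation `ρ = 𝔠 α e^{iq} α⁻¹`; explicitly `(a₁,a₂,c)` is the unique solution of
`w₁ = a₁(1−cos q) + a₂ sin q`, `w₂ = a₂(1−cos q) − a₁ sin q`,
`w₃ = c − (1/2)(a₁²+a₂²) sin q`, and this map `(a₁,a₂,c) ↦ (w₁,w₂,w₃)` is a bijection. -/
theorem stmt7 (w₁ w₂ w₃ q : ℝ) (hq : Real.cos q ≠ 1) :
    (∃! x : ℝ × ℝ × ℝ,
      (((w₁, w₂, w₃) : ℝ × ℝ × ℝ), Complex.exp ((q : ℂ) * Complex.I)) = conjExpr q x) ∧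
    (∀ x : ℝ × ℝ × ℝ,
      (((w₁, w₂, w₃) : ℝ × ℝ × ℝ), Complex.exp ((q : ℂ) * Complex.I)) = conjExpr q x ↔
        (w₁ = x.1 * (1 - Real.cos q) + x.2.1 * Real.sin q ∧
         w₂ = x.2.1 * (1 - Real.cos q) - x.1 * Real.sin q ∧
         w₃ = x.2.2 - (1/2) * (x.1 ^ 2 + x.2.1 ^ 2) * Real.sin q)) ∧
    Function.Bijective (fun x : ℝ × ℝ × ℝ =>
      ((x.1 * (1 - Real.cos q) + x.2.1 * Real.sin q,
        x.2.1 * (1 - Real.cos q) - x.1 * Real.sin q,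
        x.2.2 - (1/2) * (x.1 ^ 2 + x.2.1 ^ 2) * Real.sin q) : ℝ × ℝ × ℝ)) := by
  have hbij : Bijective (conjExprFst q) :=
    ⟨conjExprFst_injective hq, conjExprFst_surjective hq⟩
  have hconj : ∀ x, ((w₁, w₂, w₃), Complex.exp ((q : ℂ) * Complex.I)) = conjExpr q x ↔
      (w₁, w₂, w₃) = conjExprFst q x := by
    intro x
    simp [conjExpr_eq]
  refine ⟨?_, fun x => by simp [hconj, conjExprFst], hbij⟩
  obtain ⟨x, hx, huniq⟩ := hbij.existsUnique (w₁, w₂, w₃)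
  exact ⟨x, (hconj x).2 hx.symm, fun y hy => huniq y ((hconj y).1 hy).symm⟩
end
end

section
/- Let q be a nonzero real number and let a : ℝ → ℂ be a differentiable function satisfying the functional equation (1 − e^{iqs})·a(s) + e^{iqs}·(1 − e^{iqr})·a(r) = (1 − e^{iq(r+s)})·a(r+s) for all r, s ∈ ℝ. Then a is constant. -/
/-!
Writing `e t = exp (i q t)` and `b t = (1 - e t) * a t`, the functional equation says that `b` is a
cocycle, `b (r + s) = e s * b r + b s`. Comparing the equation at `(r, s)` and `(s, r)` gives
`(1 - e r) (1 - e s) (a s - a r) = 0`, so `a` is constant off the zero set of `1 - e`, which is the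
countable set `(2π / q) ℤ`. Its complement is dense, and `a` is continuous, hence constant.
-/

open Complex

theorem apply_eq_apply_of_ne_one_of_cocycle {M R : Type*} [AddCommMagma M] [CommRing R]
    [NoZeroDivisors R] {e a : M → R}
    (h : ∀ r s, (1 - e s) * a s + e s * (1 - e r) * a r = (1 - e (r + s)) * a (r + s))
    {r s : M} (hr : e r ≠ 1) (hs : e s ≠ 1) : a r = a s := by
  have hsymm : (1 - e r) * (1 - e s) * (a s - a r) = 0 := by
    have hsr := h s r
    rw [add_comm s r] at hsr
    linear_combination h r s - hsr
  rcases mul_eq_zero.mp hsymm with hrs | has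
  · rcases mul_eq_zero.mp hrs with h' | h'
    · exact absurd (sub_eq_zero.mp h').symm hr
    · exact absurd (sub_eq_zero.mp h').symm hs
  · exact (sub_eq_zero.mp has).symm

theorem countable_setOf_exp_I_mul_eq_one {q : ℝ} (hq : q ≠ 0) :
    {t : ℝ | exp (I * q * t) = 1}.Countable := by
  refine (Set.countable_range fun n : ℤ => n * (2 * Real.pi) / q).mono ?_
  intro t ht
  obtain ⟨n, hn⟩ := exp_eq_one_iff.mp ht
  have hqt : q * t = n * (2 * Real.pi) := by
    exact_mod_cast (mul_left_cancel₀ I_ne_zero (by linear_combination hn) :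
      (q * t : ℂ) = n * (2 * Real.pi))
  exact ⟨n, div_eq_of_eq_mul hq (by rw [← hqt, mul_comm])⟩

theorem exp_I_mul_mul_pi_div_eq_neg_one {q : ℝ} (hq : q ≠ 0) :
    exp (I * q * (Real.pi / q : ℝ)) = -1 := by
  rw [← exp_pi_mul_I]
  congr 1
  push_cast
  field_simp [ofReal_ne_zero.mpr hq]

/-- let `q ≠ 0` be real and `a : ℝ → ℂ` differentiable with
`(1 − e^{iqs})a(s) + e^{iqs}(1 − e^{iqr})a(r) = (1 − e^{iq(r+s)})a(r+s)` for all `r, s`.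
Then `a` is constant. -/
theorem stmt8 (q : ℝ) (hq : q ≠ 0) (a : ℝ → ℂ) (ha : Differentiable ℝ a)
    (heq : ∀ r s : ℝ,
      (1 - Complex.exp (Complex.I * q * s)) * a s
        + Complex.exp (Complex.I * q * s) * (1 - Complex.exp (Complex.I * q * r)) * a r
      = (1 - Complex.exp (Complex.I * q * (r + s))) * a (r + s)) :
    ∀ r s : ℝ, a r = a s := by
  have hpi : exp (I * q * (Real.pi / q : ℝ)) ≠ 1 := by
    rw [exp_I_mul_mul_pi_div_eq_neg_one hq]
    norm_num
  have hconst : a = fun _ => a (Real.pi / q) :=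
    ha.continuous.ext_on ((countable_setOf_exp_I_mul_eq_one hq).dense_compl ℝ) continuous_const
      fun t ht => apply_eq_apply_of_ne_one_of_cocycle (e := fun t : ℝ => exp (I * q * t))
        (by exact_mod_cast heq) ht hpi
  intro r s
  rw [hconst]
end

section
/- Let ρ : ℝ → Iso₀(Nil₃) be a continuously differentiable one-parameter group (group homomorphism), written ρ_t = ((p₁(t),p₂(t),p₃(t)), φ_t) with φ_t ∈ U₁, and assume ρ is not contained entirely in Nil₃, i.e. the angle component φ is not identically 1. Then there exist a nonzero real number q, a real number c, and a point α = (a₁,a₂) ∈ ℝ², all independent of t, such that for every t ∈ ℝ: ρ_t = ((0,0,tc),1) · ((a₁,a₂,0),1) · ((0,0,0),e^{itq}) · ((a₁,a₂,0),1)⁻¹. In particular, every one-parameter group of isometries of Nil₃ not consisting of translations is a group of helicoidal motions about a fixed vertical axis. -/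
/-!
The rotation part `u_t` of `ρ_t` is a differentiable character of `ℝ` with values in the unit
circle, hence `u_t = e^{itq}`. Writing the horizontal part of `ρ_t` as `w_t ∈ ℂ`, the group law
reads `w_{s+t} = w_s + u_s w_t`; comparing with `w_{t+s}` at a time where `u ≠ 1` gives
`w_t = β (1 - u_t)`, so `ρ` preserves the vertical axis through `β`. The height of `ρ_t` then differs
from `-|β|²/2 · Im u_t` by a continuous additive function of `t`, which is linear.
-/

noncomputable section

open Complex ComplexConjugate

theorem eq_exp_of_hasDerivAt_mul {φ : ℝ → ℂ} {a : ℂ} (h0 : φ 0 = 1)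
    (hφ : ∀ t, HasDerivAt φ (a * φ t) t) (t : ℝ) : φ t = exp (a * t) := by
  have hexp (s : ℝ) : HasDerivAt (fun s : ℝ => exp (-(a * s))) (exp (-(a * s)) * -a) s :=
    (((hasDerivAt_id (s : ℂ)).const_mul a).neg.cexp.comp_ofReal).congr_deriv (by simp)
  have hderiv (s : ℝ) : HasDerivAt (fun s => φ s * exp (-(a * s))) 0 s :=
    ((hφ s).mul (hexp s)).congr_deriv (by ring)
  have hconst : φ t * exp (-(a * t)) = 1 := by
    simpa [h0] using is_const_of_deriv_eq_zero (fun s => (hderiv s).differentiableAt)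
      (fun s => (hderiv s).deriv) t 0
  calc φ t = φ t * exp (-(a * t)) * exp (a * t) := by rw [mul_assoc, ← exp_add]; simp
    _ = exp (a * t) := by rw [hconst, one_mul]

theorem hasDerivAt_of_map_add_eq_mul {φ : ℝ → ℂ} (hmul : ∀ s t, φ (s + t) = φ s * φ t)
    (hd : DifferentiableAt ℝ φ 0) (t : ℝ) : HasDerivAt φ (deriv φ 0 * φ t) t := by
  have hd' : HasDerivAt φ (deriv φ 0) (t - t) := by rw [sub_self]; exact hd.hasDerivAt
  have hshift : HasDerivAt (fun s => φ t * φ (s - t)) (φ t * deriv φ 0) t :=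
    (hd'.comp_sub_const t t).const_mul (φ t)
  refine (hshift.congr_of_eventuallyEq (Filter.Eventually.of_forall fun s => ?_)).congr_deriv
    (mul_comm _ _)
  change φ s = φ t * φ (s - t)
  rw [← hmul, add_sub_cancel]

theorem exists_eq_exp_ofReal_mul_I {φ : ℝ → ℂ} (hd : DifferentiableAt ℝ φ 0)
    (hmul : ∀ s t, φ (s + t) = φ s * φ t) (h0 : φ 0 = 1) (hnorm : ∀ t, ‖φ t‖ = 1) :
    ∃ q : ℝ, ∀ t, φ t = exp ((t * q : ℝ) * I) := by
  have hexp := eq_exp_of_hasDerivAt_mul h0 (hasDerivAt_of_map_add_eq_mul hmul hd)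
  have hre : (deriv φ 0).re = 0 := by
    simpa [hexp, norm_exp] using hnorm 1
  refine ⟨(deriv φ 0).im, fun t => ?_⟩
  rw [hexp]
  congr 1
  apply Complex.ext <;> simp [hre, mul_comm]

theorem exists_eq_mul_one_sub_of_cocycle {G K : Type*} [AddCommMagma G] [Field K] {φ w : G → K}
    (hw : ∀ s t, w (s + t) = w s + φ s * w t) {t₀ : G} (ht₀ : φ t₀ ≠ 1) :
    ∃ β, ∀ s, w s = β * (1 - φ s) := by
  have hne : 1 - φ t₀ ≠ 0 := sub_ne_zero.mpr ht₀.symm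
  refine ⟨w t₀ / (1 - φ t₀), fun s => ?_⟩
  have hsymm : w s + φ s * w t₀ = w t₀ + φ t₀ * w s := by rw [← hw, add_comm, hw]
  field_simp
  linear_combination hsymm

def planar (p : ℝ × ℝ × ℝ) : ℂ := ⟨p.1, p.2.1⟩

theorem planar_isoMul (ρ σ : (ℝ × ℝ × ℝ) × ℂ) :
    planar (isoMul ρ σ).1 = planar ρ.1 + ρ.2 * planar σ.1 := by
  apply Complex.ext <;> simp [planar, isoMul, nilMul, rot]; ring

-- The symplectic term `a₁x₂ - a₂x₁` of `nilMul a x` is `Im (conj a · x)` in complex notation.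
theorem height_isoMul (ρ σ : (ℝ × ℝ × ℝ) × ℂ) :
    (isoMul ρ σ).1.2.2 = ρ.1.2.2 + σ.1.2.2 + (conj (planar ρ.1) * (ρ.2 * planar σ.1)).im / 2 := by
  simp [planar, isoMul, nilMul, rot]
  ring

theorem im_conj_mul_one_sub_mul (β u v : ℂ) (hu : ‖u‖ = 1) :
    (conj (β * (1 - u)) * (u * (β * (1 - v)))).im = normSq β * (u.im + v.im - (u * v).im) := by
  have hu' : conj u * u = 1 := by
    rw [mul_comm, mul_conj, normSq_eq_norm_sq, hu]; simp
  have : conj (β * (1 - u)) * (u * (β * (1 - v))) = normSq β * ((u - 1) * (1 - v)) := by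
    rw [← mul_conj, map_mul, map_sub, map_one]
    linear_combination (-(β * conj β * (1 - v))) * hu'
  rw [this, im_ofReal_mul]
  simp only [mul_im, sub_im, sub_re, one_im, one_re]
  ring

theorem exists_height_eq {ρ : ℝ → (ℝ × ℝ × ℝ) × ℂ} (hρ : Continuous ρ)
    (hhom : ∀ s t, ρ (s + t) = isoMul (ρ s) (ρ t)) (hunit : ∀ t, ‖(ρ t).2‖ = 1) {β : ℂ}
    (hβ : ∀ t, planar (ρ t).1 = β * (1 - (ρ t).2)) :
    ∃ c : ℝ, ∀ t, (ρ t).1.2.2 = t * c - normSq β / 2 * (ρ t).2.im := by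
  set h : ℝ → ℝ := fun t => (ρ t).1.2.2 + normSq β / 2 * (ρ t).2.im
  have hadd (s t : ℝ) : h (s + t) = h s + h t := by
    simp only [h, hhom s t, height_isoMul, hβ, im_conj_mul_one_sub_mul β _ _ (hunit s)]
    simp only [isoMul]
    ring
  have hcont : Continuous h := by fun_prop
  refine ⟨h 1, fun t => ?_⟩
  have hlin : h t = t * h 1 := by
    simpa using map_real_smul (AddMonoidHom.mk' h hadd) hcont t 1
  simp only [h] at hlin ⊢
  linarith

theorem eq_helicoidal {p : (ℝ × ℝ × ℝ) × ℂ} {β : ℂ} {r : ℝ}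
    (hplanar : planar p.1 = β * (1 - p.2)) (hheight : p.1.2.2 = r - normSq β / 2 * p.2.im) :
    p = isoMul (isoMul (isoMul (((0, 0, r) : ℝ × ℝ × ℝ), (1 : ℂ))
      (((β.re, β.im, 0) : ℝ × ℝ × ℝ), (1 : ℂ))) (((0, 0, 0) : ℝ × ℝ × ℝ), p.2))
      (((-β.re, -β.im, 0) : ℝ × ℝ × ℝ), (1 : ℂ)) := by
  obtain ⟨⟨x, y, z⟩, u⟩ := p
  have hx := congrArg re hplanar
  have hy := congrArg im hplanar
  simp only [planar, mul_re, mul_im, sub_re, sub_im, one_re, one_im] at hx hy hheight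
  simp only [isoMul, nilMul, rot, one_re, one_im, one_mul, mul_one, normSq_apply] at hheight ⊢
  refine Prod.ext (Prod.ext ?_ (Prod.ext ?_ ?_)) rfl
  · linear_combination hx
  · linear_combination hy
  · linear_combination hheight

/-- a continuously differentiable one-parameter group `ρ_t` in `Iso₀(Nil₃)`
which is not contained entirely in `Nil₃` is a group of helicoidal motions: there are
`q ≠ 0`, `c ∈ ℝ` and `α = (a₁,a₂) ∈ ℝ²`, independent of `t`, with
`ρ_t = ((0,0,tc),1) · ((a₁,a₂,0),1) · ((0,0,0),e^{itq}) · ((a₁,a₂,0),1)⁻¹` for all `t`. -/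
theorem stmt9 (ρ : ℝ → (ℝ × ℝ × ℝ) × ℂ)
    (hC1 : ContDiff ℝ 1 ρ)
    (hunit : ∀ t, ‖(ρ t).2‖ = 1)
    (hid : ρ 0 = (((0, 0, 0) : ℝ × ℝ × ℝ), (1 : ℂ)))
    (hhom : ∀ s t : ℝ, ρ (s + t) = isoMul (ρ s) (ρ t))
    (hnot : ¬ ∀ t : ℝ, (ρ t).2 = 1) :
    ∃ q : ℝ, q ≠ 0 ∧ ∃ c : ℝ, ∃ α : ℝ × ℝ, ∀ t : ℝ,
      ρ t = isoMul
        (isoMul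
          (isoMul (((0, 0, t * c) : ℝ × ℝ × ℝ), (1 : ℂ))
            (((α.1, α.2, 0) : ℝ × ℝ × ℝ), (1 : ℂ)))
          (((0, 0, 0) : ℝ × ℝ × ℝ), Complex.exp (((t * q : ℝ) : ℂ) * Complex.I)))
        (((-α.1, -α.2, 0) : ℝ × ℝ × ℝ), (1 : ℂ)) := by
  have hρ : Differentiable ℝ ρ := hC1.differentiable one_ne_zero
  have hmul (s t : ℝ) : (ρ (s + t)).2 = (ρ s).2 * (ρ t).2 := by rw [hhom]; rfl
  obtain ⟨q, hq⟩ := exists_eq_exp_ofReal_mul_I (hρ 0).snd hmul (by rw [hid]) hunit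
  obtain ⟨t₀, ht₀⟩ := not_forall.mp hnot
  have hq0 : q ≠ 0 := by
    rintro rfl
    exact ht₀ (by simp [hq])
  obtain ⟨β, hβ⟩ := exists_eq_mul_one_sub_of_cocycle (w := fun t => planar (ρ t).1)
    (fun s t => by rw [hhom, planar_isoMul]) ht₀
  obtain ⟨c, hc⟩ := exists_height_eq hρ.continuous hhom hunit hβ
  refine ⟨q, hq0, c, (β.re, β.im), fun t => ?_⟩
  rw [← hq t]
  exact eq_helicoidal (hβ t) (hc t)
end
end

section
/- Fix p ∈ ℝ and define f : ℝ² → ℝ³ by f(x,y) = (4x cosh 2p + cosh 4y sinh 2p, sinh 4y, −2y sinh 2p + 2x cosh 2p sinh 4y) (a translation-invariant minimal surface in Nil₃). Then for all x, y, t ∈ ℝ: f(x+t, y) = (4t cosh 2p, 0, 0) · f(x,y), where · is the Nil₃ multiplication; i.e. f is equivariant with respect to the translation z ↦ z+t on the domain and the one-parameter group of left translations by (4t cosh 2p, 0, 0) in Nil₃. -/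
noncomputable section

/-- The translation-invariant minimal surface in `Nil₃` with parameter `p`. -/
def transSurf (p x y : ℝ) : ℝ × ℝ × ℝ :=
  (4 * x * Real.cosh (2 * p) + Real.cosh (4 * y) * Real.sinh (2 * p),
   Real.sinh (4 * y),
   -2 * y * Real.sinh (2 * p) + 2 * x * Real.cosh (2 * p) * Real.sinh (4 * y))

theorem nilMul_fst_axis (a x₁ x₂ x₃ : ℝ) :
    nilMul (a, 0, 0) (x₁, x₂, x₃) = (a + x₁, x₂, x₃ + a * x₂ / 2) := by
  simp only [nilMul, zero_mul, zero_add, sub_zero]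
  ring_nf

/-- the surface `f(x,y) = transSurf p x y` is equivariant with respect to
the translation `z ↦ z + t` on the domain and the one-parameter group of left
translations by `(4t cosh 2p, 0, 0)` in `Nil₃`. -/
theorem stmt12 (p x y t : ℝ) :
    transSurf p (x + t) y
      = nilMul ((4 * t * Real.cosh (2 * p), 0, 0) : ℝ × ℝ × ℝ) (transSurf p x y) := by
  rw [transSurf, transSurf, nilMul_fst_axis]
  ring_nf
end
end

section
/- Let p, q, s ∈ ℝ and set ψ₁ = cosh s cosh p − i e^{iq} sinh s sinh p and ψ₂ = i sinh s cosh p + e^{iq} cosh s sinh p (complex numbers). Set m := √(cosh²(2p) − sin²(q) sinh²(2p)). Then m ≥ 1 (in particular m > 0), and |ψ₁|² + |ψ₂|² = cosh(2s) cosh(2p) + sin(q) sinh(2s) sinh(2p) = m · cosh(2s + arsinh(sin(q) sinh(2p)/m)), where arsinh denotes the inverse hyperbolic sine. -/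
/-!
Since `i c + e^{iq} d = i (c − i e^{iq} d)`, both `|ψ₁|²` and `|ψ₂|²` have the form
`|a − i e^{iq} b|² = a² + b² + 2ab sin q`, and the double-angle formulas turn the sum into
`A cosh 2s + B sinh 2s` with `A = cosh 2p`, `B = sin q sinh 2p`. Since `A² − B² ≥ 1`, this is
`m cosh (2s + arsinh (B/m))` with `m = √(A² − B²)`, exactly as `A cos t + B sin t` is a
shifted cosine.
-/

open Complex in
theorem Complex.sq_norm_ofReal_sub_I_mul_exp_mul (a b q : ℝ) :
    ‖(a : ℂ) - I * exp (q * I) * b‖ ^ 2 = a ^ 2 + b ^ 2 + 2 * a * b * Real.sin q := by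
  rw [Complex.sq_norm, exp_mul_I, ← ofReal_cos, ← ofReal_sin, normSq_apply]
  simp only [sub_re, sub_im, mul_re, mul_im, add_re, add_im, ofReal_re, ofReal_im, I_re, I_im]
  linear_combination b ^ 2 * Real.sin_sq_add_cos_sq q

open Complex in
theorem Complex.sq_norm_I_mul_ofReal_add_exp_mul (c d q : ℝ) :
    ‖I * c + exp (q * I) * d‖ ^ 2 = c ^ 2 + d ^ 2 + 2 * c * d * Real.sin q := by
  have hfactor : I * c + exp (q * I) * d = I * ((c : ℂ) - I * exp (q * I) * d) := by
    linear_combination exp (q * I) * d * I_sq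
  rw [hfactor, norm_mul, norm_I, one_mul, sq_norm_ofReal_sub_I_mul_exp_mul]

theorem Real.one_le_cosh_sq_sub_mul_sinh_sq (x : ℝ) {a : ℝ} (ha : a ≤ 1) :
    1 ≤ cosh x ^ 2 - a * sinh x ^ 2 := by
  nlinarith [cosh_sq x, sq_nonneg (sinh x)]

theorem Real.mul_cosh_add_mul_sinh {A B : ℝ} (hA : 0 ≤ A) (hBA : B ^ 2 < A ^ 2) (t : ℝ) :
    A * cosh t + B * sinh t = √(A ^ 2 - B ^ 2) * cosh (t + arsinh (B / √(A ^ 2 - B ^ 2))) := by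
  have hm : 0 < √(A ^ 2 - B ^ 2) := sqrt_pos.2 (sub_pos.2 hBA)
  have hm2 : √(A ^ 2 - B ^ 2) ^ 2 = A ^ 2 - B ^ 2 := sq_sqrt (sub_pos.2 hBA).le
  have hcosh : cosh (arsinh (B / √(A ^ 2 - B ^ 2))) = A / √(A ^ 2 - B ^ 2) := by
    rw [cosh_arsinh, ← sqrt_sq (div_nonneg hA hm.le)]
    congr 1
    field_simp
    linear_combination hm2
  rw [cosh_add, sinh_arsinh, hcosh]
  field_simp

/-- for `ψ₁ = cosh s cosh p − i e^{iq} sinh s sinh p` and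
`ψ₂ = i sinh s cosh p + e^{iq} cosh s sinh p`, with
`m = √(cosh²(2p) − sin²(q) sinh²(2p))`, one has `m ≥ 1` and
`|ψ₁|² + |ψ₂|² = cosh(2s)cosh(2p) + sin(q)sinh(2s)sinh(2p)
              = m cosh(2s + arsinh(sin(q)sinh(2p)/m))`. -/
theorem stmt16 (p q s : ℝ) :
    1 ≤ Real.sqrt (Real.cosh (2 * p) ^ 2 - Real.sin q ^ 2 * Real.sinh (2 * p) ^ 2) ∧
    Norm.norm ((Real.cosh s * Real.cosh p : ℝ)
        - Complex.I * Complex.exp ((q : ℂ) * Complex.I) * ((Real.sinh s * Real.sinh p : ℝ) : ℂ)) ^ 2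
      + Norm.norm (Complex.I * ((Real.sinh s * Real.cosh p : ℝ) : ℂ)
        + Complex.exp ((q : ℂ) * Complex.I) * ((Real.cosh s * Real.sinh p : ℝ) : ℂ)) ^ 2
      = Real.cosh (2 * s) * Real.cosh (2 * p)
        + Real.sin q * Real.sinh (2 * s) * Real.sinh (2 * p) ∧
    Norm.norm ((Real.cosh s * Real.cosh p : ℝ)
        - Complex.I * Complex.exp ((q : ℂ) * Complex.I) * ((Real.sinh s * Real.sinh p : ℝ) : ℂ)) ^ 2
      + Norm.norm (Complex.I * ((Real.sinh s * Real.cosh p : ℝ) : ℂ)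
        + Complex.exp ((q : ℂ) * Complex.I) * ((Real.cosh s * Real.sinh p : ℝ) : ℂ)) ^ 2
      = Real.sqrt (Real.cosh (2 * p) ^ 2 - Real.sin q ^ 2 * Real.sinh (2 * p) ^ 2)
        * Real.cosh (2 * s + Real.arsinh (Real.sin q * Real.sinh (2 * p)
            / Real.sqrt (Real.cosh (2 * p) ^ 2 - Real.sin q ^ 2 * Real.sinh (2 * p) ^ 2))) := by
  have hdisc := Real.one_le_cosh_sq_sub_mul_sinh_sq (2 * p) (Real.sin_sq_le_one q)
  have hsum := Real.mul_cosh_add_mul_sinh (A := Real.cosh (2 * p)) (B := Real.sin q * Real.sinh (2 * p))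
    (Real.cosh_pos _).le (by nlinarith) (2 * s)
  rw [mul_pow] at hsum
  rw [← hsum, Complex.sq_norm_ofReal_sub_I_mul_exp_mul, Complex.sq_norm_I_mul_ofReal_add_exp_mul]
  refine ⟨Real.one_le_sqrt.2 hdisc, ?_, ?_⟩ <;>
  · simp only [Real.cosh_two_mul, Real.sinh_two_mul]
    ring
end
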